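/- arXiv:2104.10060 — 2 statements merged into one kernel-verified Lean document; each statement's English description precedes it below -/
import Mathlib

section
/- Let g ≥ 1 be an integer and let Z be a positive definite real g×g matrix. Then the Voronoi region Vor(Z) = {β ∈ ℝ^g : nᵀZβ ≤ ½ nᵀZn for all n ∈ ℤ^g} has Lebesgue measure equal to 1 with respect to the standard Lebesgue measure on ℝ^g. -/
open Matrix MeasureTheory

/-- The Voronoi region of a (positive definite) real `g×g` matrix `Z`:
`Vor(Z) = {β ∈ ℝ^g : nᵀZβ ≤ ½ nᵀZn for all n ∈ ℤ^g}`. -/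
def VorMatrix (g : ℕ) (Z : Matrix (Fin g) (Fin g) ℝ) : Set (Fin g → ℝ) :=
  {β | ∀ n : Fin g → ℤ,
    (fun i => (n i : ℝ)) ⬝ᵥ Z.mulVec β ≤
      (1 / 2) * ((fun i => (n i : ℝ)) ⬝ᵥ Z.mulVec (fun i => (n i : ℝ)))}

/-!
For the quadratic form `Q x = xᵀZx`, the condition defining `Vor(Z)` says `Q β ≤ Q (β - n)` for
every `n ∈ ℤ^g`, so `Vor(Z)` is the Voronoi cell of the lattice `ℤ^g` with respect to `Q`. For any
positive definite form on a finite-dimensional space and any discrete subgroup `L`, this cell is a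
fundamental domain of `L`: a nearest point of `L` exists because `Q` is coercive and `L` is
discrete, so the translates of the cell cover the space, and two distinct translates `v + C` and
`C` only meet on the bisecting hyperplane `{x | polar Q x v = Q v}`, a null set. Fundamental
domains of the same group have the same measure, and the unit cube `[0, 1)^g` has volume `1`.
-/

open Set Metric Pointwise Submodule

theorem MeasureTheory.Measure.addHaar_setOf_eq_of_ne_zero {E : Type*} [NormedAddCommGroup E]
    [NormedSpace ℝ E] [FiniteDimensional ℝ E] [MeasurableSpace E] [BorelSpace E]
    (μ : Measure E) [μ.IsAddHaarMeasure] {f : E →ₗ[ℝ] ℝ} (hf : f ≠ 0) (c : ℝ) :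
    μ {x | f x = c} = 0 := by
  obtain ⟨x₀, rfl⟩ := LinearMap.surjective hf c
  have hlevel : {x | f x = f x₀} = (AffineSubspace.mk' x₀ (LinearMap.ker f) : Set E) := by
    ext x
    simp [AffineSubspace.mem_mk', sub_eq_zero]
  rw [hlevel]
  refine addHaar_affineSubspace μ _ fun htop => hf ?_
  have hker := congrArg AffineSubspace.direction htop
  rw [AffineSubspace.direction_mk', AffineSubspace.direction_top] at hker
  exact LinearMap.ker_eq_top.mp hker

namespace QuadraticMap

theorem map_sub_eq_sub_polar_add {R M N : Type*} [CommRing R] [AddCommGroup M] [Module R M]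
    [AddCommGroup N] [Module R N] (Q : QuadraticMap R M N) (x y : M) :
    Q (x - y) = Q x - polar Q x y + Q y := by
  rw [sub_eq_add_neg, QuadraticMap.map_add (⇑Q), polar_neg_right, QuadraticMap.map_neg]
  abel

section VoronoiCell

variable {M : Type*} [AddCommGroup M] [Module ℝ M]

def voronoiCell (Q : QuadraticForm ℝ M) (L : AddSubgroup M) : Set M :=
  {x | ∀ v ∈ L, Q x ≤ Q (x - v)}

theorem vadd_voronoiCell_inter_subset {Q : QuadraticForm ℝ M} {L : AddSubgroup M} {v : M}
    (hv : v ∈ L) : (v +ᵥ voronoiCell Q L) ∩ voronoiCell Q L ⊆ {x | polar Q x v = Q v} := by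
  rintro _ ⟨⟨y, hy, rfl⟩, hx⟩
  have h₁ := hx v hv
  have h₂ := hy (-v) (L.neg_mem hv)
  simp only [vadd_eq_add, add_sub_cancel_left, sub_neg_eq_add, add_comm y] at h₁ h₂
  have hsub := map_sub_eq_sub_polar_add Q (v + y) v
  rw [add_sub_cancel_left, le_antisymm h₁ h₂] at hsub
  simp only [mem_ofPred_eq, vadd_eq_add]
  linarith

end VoronoiCell

variable {E : Type*} [NormedAddCommGroup E] [NormedSpace ℝ E] [FiniteDimensional ℝ E]

theorem continuous_of_finiteDimensional (Q : QuadraticForm ℝ E) : Continuous Q := by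
  let B : E →L[ℝ] E →L[ℝ] ℝ :=
    (LinearMap.toContinuousLinearMap.toLinearMap ∘ₗ associated Q).toContinuousLinearMap
  have hB : ∀ x, B x x = Q x := associated_eq_self_apply ℝ Q
  exact (B.continuous₂.comp (continuous_id.prodMk continuous_id)).congr hB

theorem PosDef.exists_pos_mul_norm_sq_le {Q : QuadraticForm ℝ E} (hQ : Q.PosDef) :
    ∃ c > 0, ∀ x, c * ‖x‖ ^ 2 ≤ Q x := by
  obtain ⟨c, hc, hsphere⟩ := (isCompact_sphere (0 : E) 1).exists_forall_le'
    (continuous_of_finiteDimensional Q).continuousOn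
    fun x hx => hQ x (ne_zero_of_mem_unit_sphere ⟨x, hx⟩)
  refine ⟨c, hc, fun x => ?_⟩
  rcases eq_or_ne x 0 with rfl | hx
  · simp
  have hx' : 0 < ‖x‖ := norm_pos_iff.mpr hx
  have hunit : ‖x‖⁻¹ • x ∈ sphere (0 : E) 1 := by
    simp [norm_smul, hx'.ne']
  calc c * ‖x‖ ^ 2 ≤ Q (‖x‖⁻¹ • x) * ‖x‖ ^ 2 := by gcongr; exact hsphere _ hunit
    _ = Q x := by rw [QuadraticMap.map_smul, smul_eq_mul]; field_simp

variable {Q : QuadraticForm ℝ E} {L : AddSubgroup E}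

theorem isClosed_voronoiCell : IsClosed (voronoiCell Q L) := by
  have hQ := continuous_of_finiteDimensional Q
  simp only [voronoiCell, ofPred_forall]
  exact isClosed_biInter fun v _ => isClosed_le hQ (hQ.comp (continuous_sub_right v))

theorem PosDef.exists_isMinOn_sub (hQ : Q.PosDef) [DiscreteTopology L] (x : E) :
    ∃ v ∈ L, IsMinOn (fun w => Q (x - w)) L v := by
  obtain ⟨c, hc, hcoer⟩ := hQ.exists_pos_mul_norm_sq_le
  let S := {w | Q (x - w) ≤ Q x} ∩ (L : Set E)
  have hS : S.Finite := by
    refine finite_isBounded_inter_isClosed DiscreteTopology.isDiscrete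
      (isBounded_closedBall (x := x) (r := √(Q x / c)) |>.subset fun w hw => ?_)
      AddSubgroup.isClosed_of_discrete
    rw [mem_closedBall, dist_comm, dist_eq_norm]
    refine Real.le_sqrt_of_sq_le ?_
    rw [le_div_iff₀ hc, mul_comm]
    exact (hcoer _).trans hw
  obtain ⟨v, ⟨hvx, hvL⟩, hmin⟩ := exists_min_image S (fun w => Q (x - w)) hS
    ⟨0, by simp, L.zero_mem⟩
  refine ⟨v, hvL, fun w hw => ?_⟩
  by_cases hwx : Q (x - w) ≤ Q x
  · exact hmin w ⟨hwx, hw⟩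
  · exact hvx.trans (le_of_not_ge hwx)

theorem PosDef.exists_vadd_mem_voronoiCell (hQ : Q.PosDef) [DiscreteTopology L] (x : E) :
    ∃ v : L, v +ᵥ x ∈ voronoiCell Q L := by
  obtain ⟨v, hvL, hmin⟩ := hQ.exists_isMinOn_sub (L := L) x
  refine ⟨⟨-v, L.neg_mem hvL⟩, fun w hw => ?_⟩
  simp only [AddSubgroup.vadd_def, vadd_eq_add, neg_add_eq_sub]
  rw [sub_sub]
  exact hmin (L.add_mem hvL hw)

theorem PosDef.isAddFundamentalDomain_voronoiCell [MeasurableSpace E] [BorelSpace E]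
    (hQ : Q.PosDef) (L : AddSubgroup E) [DiscreteTopology L] (μ : Measure E)
    [μ.IsAddHaarMeasure] : IsAddFundamentalDomain L (voronoiCell Q L) μ := by
  refine .mk'' isClosed_voronoiCell.measurableSet.nullMeasurableSet
    (.of_forall hQ.exists_vadd_mem_voronoiCell) (fun v hv => ?_)
    (fun v => (measurePreserving_add_left μ (v : E)).quasiMeasurePreserving)
  refine measure_mono_null (vadd_voronoiCell_inter_subset v.2)
    (μ.addHaar_setOf_eq_of_ne_zero (f := (polarBilin Q).flip v) (fun hf => ?_) (Q v))
  have hvv := LinearMap.congr_fun hf v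
  simp only [LinearMap.flip_apply, polarBilin_apply_apply, polar_self,
    LinearMap.zero_apply] at hvv
  exact (hQ v (by simpa using hv)).ne' (by simpa using hvv)

end QuadraticMap

theorem mem_span_int_pi_basisFun_iff {ι : Type*} [Fintype ι] {x : ι → ℝ} :
    x ∈ span ℤ (range (Pi.basisFun ℝ ι)) ↔ ∃ n : ι → ℤ, (fun i => (n i : ℝ)) = x := by
  rw [Module.Basis.mem_span_iff_repr_mem]
  simp only [Pi.basisFun_repr, eq_intCast, mem_range, funext_iff]
  exact Classical.skolem

theorem Matrix.IsSymm.toQuadraticForm'_le_map_sub_iff {ι : Type*} [Fintype ι] [DecidableEq ι]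
    {Z : Matrix ι ι ℝ} (hZ : Z.IsSymm) (x v : ι → ℝ) :
    Z.toQuadraticForm' x ≤ Z.toQuadraticForm' (x - v) ↔ v ⬝ᵥ Z *ᵥ x ≤ 1 / 2 * (v ⬝ᵥ Z *ᵥ v) := by
  have hpolar : QuadraticMap.polar Z.toQuadraticForm' x v = 2 * (v ⬝ᵥ Z *ᵥ x) := by
    rw [toQuadraticForm', LinearMap.BilinMap.polar_toQuadraticMap, toLinearMap₂'_apply',
      toLinearMap₂'_apply', dotProduct_mulVec, ← mulVec_transpose, hZ.eq, dotProduct_comm]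
    ring
  rw [QuadraticMap.map_sub_eq_sub_polar_add, hpolar]
  simp only [toQuadraticForm', LinearMap.BilinMap.toQuadraticMap_apply, toLinearMap₂'_apply']
  constructor <;> intro h <;> linarith

theorem VorMatrix_eq_voronoiCell {g : ℕ} {Z : Matrix (Fin g) (Fin g) ℝ} (hZ : Z.IsSymm) :
    VorMatrix g Z =
      Z.toQuadraticForm'.voronoiCell (span ℤ (range (Pi.basisFun ℝ (Fin g)))).toAddSubgroup := by
  ext β
  simp only [VorMatrix, QuadraticMap.voronoiCell, mem_toAddSubgroup,
    hZ.toQuadraticForm'_le_map_sub_iff, mem_ofPred_eq]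
  constructor
  · rintro h v hv
    obtain ⟨n, rfl⟩ := mem_span_int_pi_basisFun_iff.mp hv
    exact h n
  · exact fun h n => h _ (mem_span_int_pi_basisFun_iff.mpr ⟨n, rfl⟩)

theorem volume_VorMatrix_eq_one_general (g : ℕ)
    (Z : Matrix (Fin g) (Fin g) ℝ) (hZ : Z.PosDef) :
    volume (VorMatrix g Z) = 1 := by
  let L := (span ℤ (range (Pi.basisFun ℝ (Fin g)))).toAddSubgroup
  have : Countable L := inferInstanceAs (Countable (span ℤ (range (Pi.basisFun ℝ (Fin g)))))
  rw [VorMatrix_eq_voronoiCell (isHermitian_iff_isSymm.mp hZ.isHermitian),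
    (hZ.toQuadraticForm'.isAddFundamentalDomain_voronoiCell L volume).measure_eq
      (ZSpan.isAddFundamentalDomain' (Pi.basisFun ℝ (Fin g)) volume),
    ZSpan.fundamentalDomain_pi_basisFun, volume_pi, Measure.pi_pi]
  simp

/-- For `g ≥ 1` and `Z` a positive definite real `g×g` matrix, the Voronoi
region `Vor(Z)` has Lebesgue measure `1` in `ℝ^g`. -/
theorem volume_VorMatrix_eq_one (g : ℕ) (hg : 1 ≤ g)
    (Z : Matrix (Fin g) (Fin g) ℝ) (hZ : Z.PosDef) :
    volume (VorMatrix g Z) = 1 :=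
  volume_VorMatrix_eq_one_general g Z hZ
end

section
/- With A, B, Ω(u), r and g as in the setup, there exists a real constant c > 0 such that det Im Ω(u) / (Im u)^r converges to c as Im u → ∞, uniformly in Re u: for every ε > 0 there exists M > 0 such that |det Im Ω(u)/(Im u)^r − c| < ε for all u ∈ ℍ with Im u ≥ M. (Equivalently, writing t = exp(2πiu), one has det Im Ω(t) ∼ c′·(−log|t|)^r as t → 0 for a suitable c′ > 0.) -/
/-!
Write `y = Im u` and `q = exp (2πiu)`, so that `Im Ω(u) = [[y A₀, 0], [0, 0]] + Im B(q)`.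
Dividing the first `r` rows by `y` pulls out `y ^ r` and leaves a matrix that depends
continuously on `(y⁻¹, Im B(q))`. As `Im u → ∞` we have `y⁻¹ → 0` and `|q| = exp (-2πy) → 0`
uniformly in `Re u`, so that matrix tends to `[[A₀, 0], [Im B₂₁(0), Im B₂₂(0)]]`, whose
determinant `det A₀ · det Im B₂₂(0)` is positive.
-/

open Matrix Complex MeasureTheory
open Filter Topology

namespace Matrix

variable {m n R : Type*}

theorem det_fromBlocks_smul_top [Fintype m] [Fintype n] [DecidableEq m] [DecidableEq n]
    [CommRing R] (y : R) (A : Matrix m m R) (B : Matrix m n R) (C : Matrix n m R)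
    (D : Matrix n n R) :
    (fromBlocks (y • A) (y • B) C D).det = y ^ Fintype.card m * (fromBlocks A B C D).det := by
  have : fromBlocks (y • A) (y • B) C D = fromBlocks (y • 1) 0 0 1 * fromBlocks A B C D := by
    simp [fromBlocks_multiply]
  rw [this, det_mul, det_fromBlocks_zero₁₂, det_smul, det_one, det_one, mul_one, mul_one]

def topBlockRescale [Ring R] (A : Matrix m m R) (v : R) (N : Matrix (m ⊕ n) (m ⊕ n) R) :
    Matrix (m ⊕ n) (m ⊕ n) R :=
  fromBlocks (A + v • N.toBlocks₁₁) (v • N.toBlocks₁₂) N.toBlocks₂₁ N.toBlocks₂₂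

theorem det_topBlockRescale_zero [Fintype m] [Fintype n] [DecidableEq m] [DecidableEq n]
    [CommRing R] (A : Matrix m m R) (N : Matrix (m ⊕ n) (m ⊕ n) R) :
    (topBlockRescale A 0 N).det = A.det * N.toBlocks₂₂.det := by
  simp [topBlockRescale, det_fromBlocks_zero₁₂]

theorem det_fromBlocks_smul_add [Fintype m] [Fintype n] [DecidableEq m] [DecidableEq n]
    [Field R] {y : R} (hy : y ≠ 0) (A : Matrix m m R) (N : Matrix (m ⊕ n) (m ⊕ n) R) :
    (fromBlocks (y • A) 0 0 0 + N).det = y ^ Fintype.card m * (topBlockRescale A y⁻¹ N).det := by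
  rw [topBlockRescale, ← det_fromBlocks_smul_top]
  conv_lhs => rw [← fromBlocks_toBlocks N, fromBlocks_add]
  simp [smul_add, smul_smul, hy]

theorem continuous_topBlockRescale [Ring R] [TopologicalSpace R] [IsTopologicalRing R]
    (A : Matrix m m R) :
    Continuous fun p : R × Matrix (m ⊕ n) (m ⊕ n) R => topBlockRescale A p.1 p.2 := by
  unfold topBlockRescale toBlocks₁₁ toBlocks₁₂ toBlocks₂₁ toBlocks₂₂
  fun_prop

end Matrix

theorem tendsto_exp_two_pi_I_mul_comap_im_atTop :
    Tendsto (fun u : ℂ => exp (2 * Real.pi * I * u)) (comap im atTop) (𝓝 0) := by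
  have h := (Function.Periodic.qParam_tendsto one_pos).mono_right nhdsWithin_le_nhds
  exact h.congr fun u => by rw [Function.Periodic.qParam, ofReal_one, div_one]

theorem exists_abs_sub_lt_of_tendsto_comap_im_atTop {f : ℂ → ℝ} {c : ℝ}
    (hf : Tendsto f (comap im atTop) (𝓝 c)) {ε : ℝ} (hε : 0 < ε) :
    ∃ M : ℝ, 0 < M ∧ ∀ u : ℂ, M ≤ u.im → |f u - c| < ε := by
  obtain ⟨M, hM⟩ := (atTop_basis.comap im).eventually_iff.1 (Metric.tendsto_nhds.1 hf ε hε)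
  exact ⟨max M 1, by positivity, fun u hu => hM.2 (le_of_max_le_left hu)⟩

theorem det_im_Omega_asymptotics_general (r s : ℕ)
    (A₀ : Matrix (Fin r) (Fin r) ℤ)
    (hA₀pos : (A₀.map fun k => (k : ℝ)).PosDef)
    (B : ℂ → Matrix (Fin r ⊕ Fin s) (Fin r ⊕ Fin s) ℂ)
    (hBhol : ∀ i j, DifferentiableOn ℂ (fun t => B t i j) (Metric.ball (0 : ℂ) 1))
    (hB22 : ∀ t ∈ Metric.ball (0 : ℂ) 1, ((B t).toBlocks₂₂.map Complex.im).PosDef)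
    (Ω : ℂ → Matrix (Fin r ⊕ Fin s) (Fin r ⊕ Fin s) ℂ)
    (hΩ : ∀ u : ℂ, Ω u =
      u • Matrix.fromBlocks (A₀.map fun k => (k : ℂ)) 0 0 0 +
        B (Complex.exp (2 * (Real.pi : ℂ) * Complex.I * u))) :
    ∃ c : ℝ, 0 < c ∧
      ∀ ε : ℝ, 0 < ε → ∃ M : ℝ, 0 < M ∧ ∀ u : ℂ, 0 < u.im → M ≤ u.im →
        |((Ω u).map Complex.im).det / u.im ^ r - c| < ε := by
  set A := A₀.map fun k => (k : ℝ)
  set q := fun u : ℂ => Complex.exp (2 * (Real.pi : ℂ) * Complex.I * u)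
  have hImΩ : ∀ u, (Ω u).map im = fromBlocks (u.im • A) 0 0 0 + (B (q u)).map im := by
    intro u
    ext (i | i) (j | j) <;> simp [hΩ, A, q]
  have hBim : ContinuousAt (fun t => (B t).map im) 0 :=
    continuousAt_pi.2 fun i => continuousAt_pi.2 fun j => continuous_im.continuousAt.comp
      ((hBhol i j).continuousOn.continuousAt (Metric.ball_mem_nhds _ one_pos))
  have hpath : Tendsto (fun u : ℂ => (u.im⁻¹, (B (q u)).map im)) (comap im atTop)
      (𝓝 (0, (B 0).map im)) :=
    (tendsto_inv_atTop_zero.comp tendsto_comap).prodMk_nhds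
      (hBim.tendsto.comp tendsto_exp_two_pi_I_mul_comap_im_atTop)
  have hlim := ((continuous_topBlockRescale A).matrix_det.tendsto _).comp hpath
  rw [det_topBlockRescale_zero] at hlim
  refine ⟨_, mul_pos hA₀pos.det_pos (hB22 0 (Metric.mem_ball_self one_pos)).det_pos,
    fun ε hε => ?_⟩
  obtain ⟨M, hM, hMε⟩ := exists_abs_sub_lt_of_tendsto_comap_im_atTop hlim hε
  refine ⟨M, hM, fun u hu hMu => ?_⟩
  rw [hImΩ, det_fromBlocks_smul_add hu.ne', Fintype.card_fin,
    mul_div_cancel_left₀ _ (pow_ne_zero r hu.ne')]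
  exact hMε u hMu

/-- In the nilpotent-orbit setup (`g = r + s ≥ 1`, `A = [[A₀,0],[0,0]]` with
`A₀` positive definite integral `r×r`, `B` bounded holomorphic on `𝔻` with symmetric
values, `Ω(u) = A·u + B(exp(2πiu)) ∈ ℍ_g` for `u ∈ ℍ`, the lower-right block of `B(t)`
having positive definite imaginary part), there is a real constant `c > 0` such that
`det Im Ω(u) / (Im u)^r → c` as `Im u → ∞`, uniformly in `Re u`. -/
theorem det_im_Omega_asymptotics (r s : ℕ) (hg : 1 ≤ r + s)
    (A₀ : Matrix (Fin r) (Fin r) ℤ) (hA₀symm : A₀.IsSymm)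
    (hA₀pos : (A₀.map fun k => (k : ℝ)).PosDef)
    (B : ℂ → Matrix (Fin r ⊕ Fin s) (Fin r ⊕ Fin s) ℂ)
    (hBhol : ∀ i j, DifferentiableOn ℂ (fun t => B t i j) (Metric.ball (0 : ℂ) 1))
    (hBbdd : ∃ C : ℝ, ∀ t ∈ Metric.ball (0 : ℂ) 1, ∀ i j, ‖B t i j‖ ≤ C)
    (hBsymm : ∀ t ∈ Metric.ball (0 : ℂ) 1, (B t).IsSymm)
    (hB22 : ∀ t ∈ Metric.ball (0 : ℂ) 1, ((B t).toBlocks₂₂.map Complex.im).PosDef)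
    (Ω : ℂ → Matrix (Fin r ⊕ Fin s) (Fin r ⊕ Fin s) ℂ)
    (hΩ : ∀ u : ℂ, Ω u =
      u • Matrix.fromBlocks (A₀.map fun k => (k : ℂ)) 0 0 0 +
        B (Complex.exp (2 * (Real.pi : ℂ) * Complex.I * u)))
    (hΩsymm : ∀ u : ℂ, 0 < u.im → (Ω u).IsSymm)
    (hΩpos : ∀ u : ℂ, 0 < u.im → ((Ω u).map Complex.im).PosDef) :
    ∃ c : ℝ, 0 < c ∧
      ∀ ε : ℝ, 0 < ε → ∃ M : ℝ, 0 < M ∧ ∀ u : ℂ, 0 < u.im → M ≤ u.im →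
        |((Ω u).map Complex.im).det / u.im ^ r - c| < ε :=
  det_im_Omega_asymptotics_general r s A₀ hA₀pos B hBhol hB22 Ω hΩ
end
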